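/- (Inversion property of Q.) Let β be a (φ, ℓ)-quasiperiodic family and define β⁻ by β⁻_t := β_{−t}. Then β⁻ is quasiperiodic for the gauge datum (φ⁻¹, −r), where r = φ∘ℓ (i.e. β⁻_{t+1} = φ⁻¹∘β⁻_t − (−φ⁻¹∘r)), and for all x, y ∈ E: Q(β⁻)(x, y) = −Q(β)(x, y), where Q(β⁻) is taken with respect to the gauge datum (φ⁻¹, −r). -/

import Mathlib

/-- `(a ∧_B b)(x, y) = B(a x, b y) - B(a y, b x)` for maps `a, b : E → 𝔤`. -/
def wedgeB {𝔤 E : Type*} [NormedAddCommGroup 𝔤] [NormedSpace ℝ 𝔤]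
    [AddCommGroup E] [Module ℝ E]
    (B : 𝔤 →ₗ[ℝ] 𝔤 →ₗ[ℝ] ℝ) (a b : E → 𝔤) (x y : E) : ℝ :=
  B (a x) (b y) - B (a y) (b x)

/-- A `(φ, r)`-quasiperiodic family of linear maps `E → 𝔤`: smooth in `t` and
`β (t+1) = φ ∘ β t - r`. -/
def QuasiPeriodic {𝔤 E : Type*} [NormedAddCommGroup 𝔤] [NormedSpace ℝ 𝔤]
    [AddCommGroup E] [Module ℝ E]
    (φ : 𝔤 → 𝔤) (r : E → 𝔤) (β : ℝ → E →ₗ[ℝ] 𝔤) : Prop :=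
  (∀ x : E, ContDiff ℝ (⊤ : ℕ∞) (fun t => β t x)) ∧
  ∀ (t : ℝ) (x : E), β (t + 1) x = φ (β t x) - r x

/-- The functional `Q(β)(x,y) = (1/2)(ℓ ∧_B β_0)(x,y) + (1/2)∫₀¹ (β_t ∧_B β̇_t)(x,y) dt`. -/
noncomputable def Qfun {𝔤 E : Type*} [NormedAddCommGroup 𝔤] [NormedSpace ℝ 𝔤]
    [AddCommGroup E] [Module ℝ E]
    (B : 𝔤 →ₗ[ℝ] 𝔤 →ₗ[ℝ] ℝ) (ℓ : E → 𝔤) (β : ℝ → E → 𝔤) (x y : E) : ℝ :=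
  (1/2 : ℝ) * wedgeB B ℓ (β 0) x y
    + (1/2 : ℝ) * ∫ t in (0:ℝ)..1,
        wedgeB B (β t) (fun e => deriv (fun s => β s e) t) x y

/-!
Reversing time turns `∫₀¹ β_t ∧ β̇_t` into `-∫₋₁⁰ β_t ∧ β̇_t`. Quasiperiodicity gives
`β_{t-1} = φ⁻¹(β_t + r)`, so, `φ` preserving `B`, the integrand on `[-1, 0]` is the one on `[0, 1]`
plus the exact derivative `r ∧ β̇_t`, whose integral is `r ∧ β_1 - r ∧ β_0`. The `r ∧ β_0` term
cancels the boundary term of `Q(β⁻)`, and `r ∧ β_1 = φℓ ∧ (φβ_0 - φℓ) = ℓ ∧ β_0` by invariance and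
symmetry of `B`, which is the boundary term of `Q(β)`.
-/
section Wedge

variable {𝔤 E : Type*} [NormedAddCommGroup 𝔤] [NormedSpace ℝ 𝔤] [AddCommGroup E] [Module ℝ E]
  (B : 𝔤 →ₗ[ℝ] 𝔤 →ₗ[ℝ] ℝ)

noncomputable def wedgeDeriv (β : ℝ → E → 𝔤) (t : ℝ) (x y : E) : ℝ :=
  wedgeB B (β t) (fun e => deriv (fun s => β s e) t) x y

theorem Qfun_eq (ℓ : E → 𝔤) (β : ℝ → E → 𝔤) (x y : E) :
    Qfun B ℓ β x y
      = 1 / 2 * wedgeB B ℓ (β 0) x y + 1 / 2 * ∫ t in (0:ℝ)..1, wedgeDeriv B β t x y :=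
  rfl

theorem wedgeB_neg_left (a b : E → 𝔤) (x y : E) :
    wedgeB B (fun e => -a e) b x y = -wedgeB B a b x y := by
  simp only [wedgeB, map_neg, LinearMap.neg_apply]
  ring

theorem wedgeDeriv_comp_neg (β : ℝ → E → 𝔤) (t : ℝ) (x y : E) :
    wedgeDeriv B (fun t => β (-t)) t x y = -wedgeDeriv B β (-t) x y := by
  simp only [wedgeDeriv, wedgeB]
  rw [deriv_comp_neg (fun s => β s x), deriv_comp_neg (fun s => β s y), map_neg, map_neg]
  ring

theorem integral_wedgeDeriv_comp_neg (β : ℝ → E → 𝔤) (a b : ℝ) (x y : E) :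
    ∫ t in a..b, wedgeDeriv B (fun t => β (-t)) t x y = -∫ t in -b..-a, wedgeDeriv B β t x y := by
  simp only [wedgeDeriv_comp_neg, intervalIntegral.integral_neg,
    intervalIntegral.integral_comp_neg fun t => wedgeDeriv B β t x y]

variable [FiniteDimensional ℝ 𝔤]

theorem continuous_wedgeB {a b : ℝ → E → 𝔤} (ha : ∀ e, Continuous fun t => a t e)
    (hb : ∀ e, Continuous fun t => b t e) (x y : E) :
    Continuous fun t => wedgeB B (a t) (b t) x y := by
  have hB := (LinearMap.toContinuousBilinearMap (𝕜 := ℝ) B).continuous₂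
  exact (hB.comp₂ (ha x) (hb y)).sub (hB.comp₂ (ha y) (hb x))

theorem hasDerivAt_wedgeB_const_left (c : E → 𝔤) {β : ℝ → E → 𝔤} {x y : E} {t : ℝ}
    (hx : DifferentiableAt ℝ (fun s => β s x) t) (hy : DifferentiableAt ℝ (fun s => β s y) t) :
    HasDerivAt (fun s => wedgeB B c (β s) x y)
      (wedgeB B c (fun e => deriv (fun s => β s e) t) x y) t :=
  ((B (c x)).toContinuousLinearMap.hasFDerivAt.comp_hasDerivAt t hy.hasDerivAt).sub
    ((B (c y)).toContinuousLinearMap.hasFDerivAt.comp_hasDerivAt t hx.hasDerivAt)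

theorem integral_wedgeB_deriv_const_left (c : E → 𝔤) {β : ℝ → E → 𝔤}
    (hβ : ∀ e, ContDiff ℝ 1 fun t => β t e) (a b : ℝ) (x y : E) :
    ∫ t in a..b, wedgeB B c (fun e => deriv (fun s => β s e) t) x y
      = wedgeB B c (β b) x y - wedgeB B c (β a) x y := by
  refine intervalIntegral.integral_eq_sub_of_hasDerivAt
    (f := fun s => wedgeB B c (β s) x y) (fun t _ => ?_) ?_
  · exact hasDerivAt_wedgeB_const_left B c ((hβ x).differentiable one_ne_zero t)
      ((hβ y).differentiable one_ne_zero t)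
  · exact (continuous_wedgeB B (a := fun _ => c) (fun _ => continuous_const)
      (fun e => (hβ e).continuous_deriv le_rfl) x y).intervalIntegrable a b

end Wedge

namespace QuasiPeriodic

variable {𝔤 E : Type*} [NormedAddCommGroup 𝔤] [NormedSpace ℝ 𝔤] [AddCommGroup E] [Module ℝ E]
  {φ : 𝔤 ≃ₗ[ℝ] 𝔤} {r : E → 𝔤} {β : ℝ → E →ₗ[ℝ] 𝔤}

theorem apply_sub_one (hβ : QuasiPeriodic φ r β) (t : ℝ) (x : E) :
    β (t - 1) x = φ.symm (β t x + r x) := by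
  have h := hβ.2 (t - 1) x
  rw [sub_add_cancel] at h
  rw [h, sub_add_cancel, LinearEquiv.symm_apply_apply]

theorem comp_neg (hβ : QuasiPeriodic φ r β) :
    QuasiPeriodic φ.symm (fun x => -φ.symm (r x)) (fun t => β (-t)) := by
  refine ⟨fun x => (hβ.1 x).comp contDiff_neg, fun t x => ?_⟩
  dsimp only
  rw [neg_add', hβ.apply_sub_one, map_add, sub_neg_eq_add]

variable [FiniteDimensional ℝ 𝔤]

theorem deriv_sub_one (hβ : QuasiPeriodic φ r β) (t : ℝ) (x : E) :
    deriv (fun s => β s x) (t - 1) = φ.symm (deriv (fun s => β s x) t) := by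
  have hβx : HasDerivAt (fun s => β s x) (deriv (fun s => β s x) t) t :=
    ((hβ.1 x).differentiable (by simp) t).hasDerivAt
  rw [← deriv_comp_sub_const (fun s => β s x)]
  simp_rw [hβ.apply_sub_one, map_add]
  exact (((φ.symm : 𝔤 →ₗ[ℝ] 𝔤).toContinuousLinearMap.hasFDerivAt.comp_hasDerivAt t hβx).add_const
    _).deriv

variable (B : 𝔤 →ₗ[ℝ] 𝔤 →ₗ[ℝ] ℝ)

theorem wedgeDeriv_sub_one (hφB : ∀ a b, B (φ a) (φ b) = B a b) (hβ : QuasiPeriodic φ r β)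
    (t : ℝ) (x y : E) :
    wedgeDeriv B (fun t => ⇑(β t)) (t - 1) x y
      = wedgeDeriv B (fun t => ⇑(β t)) t x y
        + wedgeB B r (fun e => deriv (fun s => β s e) t) x y := by
  have hφB' (a b : 𝔤) : B (φ.symm a) (φ.symm b) = B a b := by
    simpa using (hφB (φ.symm a) (φ.symm b)).symm
  simp only [wedgeDeriv, wedgeB, hβ.apply_sub_one, hβ.deriv_sub_one, hφB', map_add,
    LinearMap.add_apply]
  ring

theorem integral_wedgeDeriv_neg_one_zero (hφB : ∀ a b, B (φ a) (φ b) = B a b)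
    (hβ : QuasiPeriodic φ r β) (x y : E) :
    ∫ t in (-1:ℝ)..0, wedgeDeriv B (fun t => ⇑(β t)) t x y
      = (∫ t in (0:ℝ)..1, wedgeDeriv B (fun t => ⇑(β t)) t x y)
        + (wedgeB B r (β 1) x y - wedgeB B r (β 0) x y) := by
  have hC (e : E) : ContDiff ℝ 1 fun t => β t e := (hβ.1 e).of_le (by simp)
  have hderiv (e : E) : Continuous fun t => deriv (fun s => β s e) t :=
    (hC e).continuous_deriv le_rfl
  have hF : Continuous fun t => wedgeDeriv B (fun t => ⇑(β t)) t x y :=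
    continuous_wedgeB B (fun e => (hC e).continuous) hderiv x y
  have hG : Continuous fun t => wedgeB B r (fun e => deriv (fun s => β s e) t) x y :=
    continuous_wedgeB B (a := fun _ => r) (fun _ => continuous_const) hderiv x y
  calc ∫ t in (-1:ℝ)..0, wedgeDeriv B (fun t => ⇑(β t)) t x y
      = ∫ t in (0:ℝ)..1, wedgeDeriv B (fun t => ⇑(β t)) (t - 1) x y := by
        rw [intervalIntegral.integral_comp_sub_right (fun t => wedgeDeriv B _ t x y)]
        norm_num
    _ = ∫ t in (0:ℝ)..1, (wedgeDeriv B (fun t => ⇑(β t)) t x y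
          + wedgeB B r (fun e => deriv (fun s => β s e) t) x y) :=
        intervalIntegral.integral_congr fun t _ => hβ.wedgeDeriv_sub_one B hφB t x y
    _ = _ := by
        rw [intervalIntegral.integral_add (hF.intervalIntegrable _ _) (hG.intervalIntegrable _ _),
          integral_wedgeB_deriv_const_left B r hC]

end QuasiPeriodic

theorem Q_inversion_general
    {𝔤 E : Type*} [NormedAddCommGroup 𝔤] [NormedSpace ℝ 𝔤] [FiniteDimensional ℝ 𝔤]
    [AddCommGroup E] [Module ℝ E]
    (B : 𝔤 →ₗ[ℝ] 𝔤 →ₗ[ℝ] ℝ)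
    (B_symm : ∀ x y : 𝔤, B x y = B y x)
    (φ : 𝔤 ≃ₗ[ℝ] 𝔤)
    (hφB : ∀ x y : 𝔤, B (φ x) (φ y) = B x y)
    (ℓ : E →ₗ[ℝ] 𝔤)
    (β : ℝ → E →ₗ[ℝ] 𝔤)
    (hβ : QuasiPeriodic ⇑φ (fun x => φ (ℓ x)) β) :
    QuasiPeriodic ⇑φ.symm (fun x => -(φ.symm (φ (ℓ x)))) (fun t => β (-t)) ∧
    ∀ x y : E,
      Qfun B (fun e => -(φ (ℓ e))) (fun t => ⇑(β (-t))) x y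
        = - Qfun B ⇑ℓ (fun t => ⇑(β t)) x y := by
  refine ⟨hβ.comp_neg, fun x y => ?_⟩
  have hβ1 : wedgeB B (fun e => φ (ℓ e)) (β 1) x y = wedgeB B ℓ (β 0) x y := by
    have h := hβ.2 0
    simp only [zero_add] at h
    simp only [wedgeB, h, map_sub, hφB, B_symm (ℓ y) (ℓ x)]
    ring
  rw [Qfun_eq, Qfun_eq, integral_wedgeDeriv_comp_neg B (fun t => ⇑(β t)), neg_zero,
    wedgeB_neg_left, hβ.integral_wedgeDeriv_neg_one_zero B hφB, hβ1]
  ring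

/-- inversion property of `Q`: for a `(φ, ℓ)`-quasiperiodic family
`β` and `β⁻_t := β_{-t}`, the family `β⁻` is quasiperiodic for the gauge datum
`(φ⁻¹, -r)` with `r = φ∘ℓ` (i.e. `β⁻_{t+1} = φ⁻¹ ∘ β⁻_t - (-(φ⁻¹∘r))`), and
`Q(β⁻) = -Q(β)` where `Q(β⁻)` is taken with respect to `(φ⁻¹, -r)`. -/
theorem Q_inversion
    {𝔤 E : Type*} [NormedAddCommGroup 𝔤] [NormedSpace ℝ 𝔤] [FiniteDimensional ℝ 𝔤]
    [AddCommGroup E] [Module ℝ E]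
    (br : 𝔤 →ₗ[ℝ] 𝔤 →ₗ[ℝ] 𝔤)
    (br_alt : ∀ x : 𝔤, br x x = 0)
    (br_jacobi : ∀ x y z : 𝔤, br (br x y) z + br (br y z) x + br (br z x) y = 0)
    (B : 𝔤 →ₗ[ℝ] 𝔤 →ₗ[ℝ] ℝ)
    (B_symm : ∀ x y : 𝔤, B x y = B y x)
    (B_inv : ∀ x y z : 𝔤, B (br x y) z = B x (br y z))
    (φ : 𝔤 ≃ₗ[ℝ] 𝔤)
    (hφbr : ∀ x y : 𝔤, φ (br x y) = br (φ x) (φ y))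
    (hφB : ∀ x y : 𝔤, B (φ x) (φ y) = B x y)
    (ℓ : E →ₗ[ℝ] 𝔤)
    (β : ℝ → E →ₗ[ℝ] 𝔤)
    (hβ : QuasiPeriodic ⇑φ (fun x => φ (ℓ x)) β) :
    QuasiPeriodic ⇑φ.symm (fun x => -(φ.symm (φ (ℓ x)))) (fun t => β (-t)) ∧
    ∀ x y : E,
      Qfun B (fun e => -(φ (ℓ e))) (fun t => ⇑(β (-t))) x y
        = - Qfun B ⇑ℓ (fun t => ⇑(β t)) x y :=
  Q_inversion_general B B_symm φ hφB ℓ β hβ
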